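/- A pair (π, L) is a CMFG Nash equilibrium if and only if π ∈ Π(L) and there exist (y, z, λ) such that (L, y, z, λ) is a solution of the KKT system 𝒦(L) (i.e., the quadruple with d = L satisfies all conditions of 𝒦(L)). -/

import Mathlib

open Finset

namespace CMFG

/-- Membership in the probability simplex on a finite type. -/
def IsSimplex {X : Type*} [Fintype X] (f : X → ℝ) : Prop :=
  (∀ x, 0 ≤ f x) ∧ ∑ x, f x = 1

variable {S A : Type*} [Fintype S] [Fintype A]

/-- A (Markov, randomized) policy: `π t s ∈ Δ(A)` for every time `t` and state `s`. -/
def IsPolicy (π : ℕ → S → A → ℝ) : Prop := ∀ t s, IsSimplex (π t s)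

/-- A mean-field flow: `L t ∈ Δ(S × A)` for every time `t`. -/
def IsFlow (L : ℕ → S × A → ℝ) : Prop := ∀ t, IsSimplex (L t)

/-- The transition data is a Markov kernel: `p t s a m ∈ Δ(S)` whenever `m ∈ Δ(S × A)`. -/
def IsKernel (T : ℕ) (p : ℕ → S → A → (S × A → ℝ) → S → ℝ) : Prop :=
  ∀ t ≤ T, ∀ s a m, IsSimplex m → IsSimplex (p t s a m)

/-- The occupation measure `Ψ(π, L)` of a representative agent using policy `π`
under the mean-field flow `L`. -/
def psi (μ0 : S → ℝ) (p : ℕ → S → A → (S × A → ℝ) → S → ℝ)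
    (π : ℕ → S → A → ℝ) (L : ℕ → S × A → ℝ) : ℕ → S × A → ℝ
  | 0 => fun sa => π 0 sa.1 sa.2 * μ0 sa.1
  | t + 1 => fun sa =>
      π (t + 1) sa.1 sa.2 *
        ∑ sa' : S × A, p t sa'.1 sa'.2 (L t) sa.1 * psi μ0 p π L t sa'

/-- The mean-field flow `Ψ(π)` induced by the policy `π` alone. -/
def psiInd (μ0 : S → ℝ) (p : ℕ → S → A → (S × A → ℝ) → S → ℝ)
    (π : ℕ → S → A → ℝ) : ℕ → S × A → ℝ
  | 0 => fun sa => π 0 sa.1 sa.2 * μ0 sa.1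
  | t + 1 => fun sa =>
      π (t + 1) sa.1 sa.2 *
        ∑ sa' : S × A, p t sa'.1 sa'.2 (psiInd μ0 p π t) sa.1 * psiInd μ0 p π t sa'

/-- Expected cumulative reward `V^π(L)` of policy `π` under the mean-field flow `L`. -/
def V (T : ℕ) (μ0 : S → ℝ) (p : ℕ → S → A → (S × A → ℝ) → S → ℝ)
    (r : ℕ → S → A → (S × A → ℝ) → ℝ) (π : ℕ → S → A → ℝ) (L : ℕ → S × A → ℝ) : ℝ :=
  ∑ t ∈ Finset.range (T + 1), ∑ sa : S × A, r t sa.1 sa.2 (L t) * psi μ0 p π L t sa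

/-- Expected cumulative cost `𝒞^π(L) ∈ ℝ^k` of policy `π` under the mean-field flow `L`. -/
def Cost (T k : ℕ) (μ0 : S → ℝ) (p : ℕ → S → A → (S × A → ℝ) → S → ℝ)
    (c : ℕ → S → A → (S × A → ℝ) → Fin k → ℝ) (π : ℕ → S → A → ℝ)
    (L : ℕ → S × A → ℝ) : Fin k → ℝ :=
  fun i => ∑ t ∈ Finset.range (T + 1), ∑ sa : S × A, c t sa.1 sa.2 (L t) i * psi μ0 p π L t sa

/-- `π` is an optimal policy of the constrained MDP `CMDP(L)` with threshold `γ0`. -/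
def IsCMDPOptimal (T k : ℕ) (μ0 : S → ℝ) (p : ℕ → S → A → (S × A → ℝ) → S → ℝ)
    (r : ℕ → S → A → (S × A → ℝ) → ℝ) (c : ℕ → S → A → (S × A → ℝ) → Fin k → ℝ)
    (γ0 : Fin k → ℝ) (π : ℕ → S → A → ℝ) (L : ℕ → S × A → ℝ) : Prop :=
  IsPolicy π ∧ (∀ i, Cost T k μ0 p c π L i ≤ γ0 i) ∧
    ∀ π', IsPolicy π' → (∀ i, Cost T k μ0 p c π' L i ≤ γ0 i) →
      V T μ0 p r π' L ≤ V T μ0 p r π L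

/-- `π` is an optimal policy of the unconstrained MDP `MDP(L)`. -/
def IsMDPOptimal (T : ℕ) (μ0 : S → ℝ) (p : ℕ → S → A → (S × A → ℝ) → S → ℝ)
    (r : ℕ → S → A → (S × A → ℝ) → ℝ) (π : ℕ → S → A → ℝ) (L : ℕ → S × A → ℝ) : Prop :=
  IsPolicy π ∧ ∀ π', IsPolicy π' → V T μ0 p r π' L ≤ V T μ0 p r π L

/-- `(π, L)` is a Nash equilibrium of the constrained mean-field game (Definition 2.1):
optimality for `CMDP(L)` together with the consistency condition `L = Ψ(π)` on `𝒯`. -/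
def IsCMFGNash (T k : ℕ) (μ0 : S → ℝ) (p : ℕ → S → A → (S × A → ℝ) → S → ℝ)
    (r : ℕ → S → A → (S × A → ℝ) → ℝ) (c : ℕ → S → A → (S × A → ℝ) → Fin k → ℝ)
    (γ0 : Fin k → ℝ) (π : ℕ → S → A → ℝ) (L : ℕ → S × A → ℝ) : Prop :=
  IsCMDPOptimal T k μ0 p r c γ0 π L ∧ ∀ t ≤ T, L t = psiInd μ0 p π t

/-- Strict feasibility (Assumption 3.1) with margin `δ`. -/
def StrictFeasible (T k : ℕ) (μ0 : S → ℝ) (p : ℕ → S → A → (S × A → ℝ) → S → ℝ)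
    (c : ℕ → S → A → (S × A → ℝ) → Fin k → ℝ) (γ0 : Fin k → ℝ) (δ : ℝ) : Prop :=
  0 < δ ∧ ∀ L, IsFlow L → ∀ i : Fin k, ∃ π, IsPolicy π ∧
    (∀ j, Cost T k μ0 p c π L j ≤ γ0 j) ∧ Cost T k μ0 p c π L i ≤ γ0 i - δ

/-- Strengthened strict feasibility (Assumption 5.1) with margin `δ`. -/
def StrongFeasible (T k : ℕ) (μ0 : S → ℝ) (p : ℕ → S → A → (S × A → ℝ) → S → ℝ)
    (c : ℕ → S → A → (S × A → ℝ) → Fin k → ℝ) (γ0 : Fin k → ℝ) (δ : ℝ) : Prop :=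
  0 < δ ∧ ∀ L, IsFlow L → ∃ π, IsPolicy π ∧ ∀ i, Cost T k μ0 p c π L i ≤ γ0 i - δ

/-- Continuity (Assumption 3.2): `p`, `r`, `c` are continuous in the mean-field argument. -/
def ContinuousData (T k : ℕ) (p : ℕ → S → A → (S × A → ℝ) → S → ℝ)
    (r : ℕ → S → A → (S × A → ℝ) → ℝ)
    (c : ℕ → S → A → (S × A → ℝ) → Fin k → ℝ) : Prop :=
  (∀ t ≤ T, ∀ s a, ContinuousOn (fun m : S × A → ℝ => p t s a m) {m | IsSimplex m}) ∧
  (∀ t ≤ T, ∀ s a, ContinuousOn (fun m : S × A → ℝ => r t s a m) {m | IsSimplex m}) ∧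
  (∀ t ≤ T, ∀ s a, ContinuousOn (fun m : S × A → ℝ => c t s a m) {m | IsSimplex m})

/-- Boundedness: `0 ≤ r ≤ rmax` and `0 ≤ c ≤ cmax` entrywise on the simplex. -/
def BoundedData (T k : ℕ) (r : ℕ → S → A → (S × A → ℝ) → ℝ)
    (c : ℕ → S → A → (S × A → ℝ) → Fin k → ℝ) (rmax cmax : ℝ) : Prop :=
  ∀ t ≤ T, ∀ s a m, IsSimplex m →
    (0 ≤ r t s a m ∧ r t s a m ≤ rmax) ∧ ∀ i, 0 ≤ c t s a m i ∧ c t s a m i ≤ cmax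

/-- The ℓ¹ norm of a finitely supported real vector. -/
def norm1 {J : Type*} [Fintype J] (v : J → ℝ) : ℝ := ∑ j, |v j|

/-- The ℓ² norm of a finitely supported real vector. -/
noncomputable def norm2 {J : Type*} [Fintype J] (v : J → ℝ) : ℝ :=
  Real.sqrt (∑ j, (v j) ^ 2)

/-- Lipschitz continuity (Assumption 3.3) of `p`, `r`, `c` in the mean-field argument. -/
def LipschitzData (T k : ℕ) (p : ℕ → S → A → (S × A → ℝ) → S → ℝ)
    (r : ℕ → S → A → (S × A → ℝ) → ℝ)
    (c : ℕ → S → A → (S × A → ℝ) → Fin k → ℝ) (Cp Cr Cc : ℝ) : Prop :=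
  0 < Cp ∧ 0 < Cr ∧ 0 < Cc ∧
  ∀ t ≤ T, ∀ m1 m2 : S × A → ℝ, IsSimplex m1 → IsSimplex m2 →
    ((∑ sa : S × A, ∑ s' : S, |p t sa.1 sa.2 m1 s' - p t sa.1 sa.2 m2 s'|) ≤
        Cp * norm1 (fun sa => m1 sa - m2 sa)) ∧
    ((∑ sa : S × A, |r t sa.1 sa.2 m1 - r t sa.1 sa.2 m2|) ≤
        Cr * norm1 (fun sa => m1 sa - m2 sa)) ∧
    ((∑ sa : S × A, ∑ i, |c t sa.1 sa.2 m1 i - c t sa.1 sa.2 m2 i|) ≤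
        Cc * norm1 (fun sa => m1 sa - m2 sa))

/-- Lipschitz continuity of the transition kernels alone. -/
def LipschitzKernel (T : ℕ) (p : ℕ → S → A → (S × A → ℝ) → S → ℝ) (Cp : ℝ) : Prop :=
  0 < Cp ∧ ∀ t ≤ T, ∀ m1 m2 : S × A → ℝ, IsSimplex m1 → IsSimplex m2 →
    (∑ sa : S × A, ∑ s' : S, |p t sa.1 sa.2 m1 s' - p t sa.1 sa.2 m2 s'|) ≤
      Cp * norm1 (fun sa => m1 sa - m2 sa)

/-- The reward vector `r_L ∈ ℝ^{|S||A||𝒯|}`. -/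
def rLvec (T : ℕ) (r : ℕ → S → A → (S × A → ℝ) → ℝ) (L : ℕ → S × A → ℝ) :
    Fin (T + 1) × S × A → ℝ :=
  fun x => r (x.1 : ℕ) x.2.1 x.2.2 (L (x.1 : ℕ))

/-- The cost matrix `c_L ∈ ℝ^{k × |S||A||𝒯|}`. -/
def cLmat (T k : ℕ) (c : ℕ → S → A → (S × A → ℝ) → Fin k → ℝ) (L : ℕ → S × A → ℝ) :
    Fin k → Fin (T + 1) × S × A → ℝ :=
  fun i x => c (x.1 : ℕ) x.2.1 x.2.2 (L (x.1 : ℕ)) i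

/-- The right-hand-side vector `b ∈ ℝ^{|S||𝒯|}`. -/
def bvec (T : ℕ) (μ0 : S → ℝ) : Fin (T + 1) × S → ℝ :=
  fun row => if (row.1 : ℕ) = T then μ0 row.2 else 0

/-- The constraint matrix `A_L ∈ ℝ^{|S||𝒯| × |S||A||𝒯|}`; `A_L d = b` encodes
`Σ_a d_0(s,a) = μ0(s)` and `Σ_a d_{t+1}(s,a) = Σ_{s',a'} p_t(s|s',a',L_t) d_t(s',a')`. -/
def ALmat [DecidableEq S] (T : ℕ) (p : ℕ → S → A → (S × A → ℝ) → S → ℝ)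
    (L : ℕ → S × A → ℝ) : Fin (T + 1) × S → Fin (T + 1) × S × A → ℝ :=
  fun row col =>
    if (row.1 : ℕ) < T then
      (if col.1 = row.1 then p (row.1 : ℕ) col.2.1 col.2.2 (L (row.1 : ℕ)) row.2 else 0) +
        (if (col.1 : ℕ) = (row.1 : ℕ) + 1 ∧ col.2.1 = row.2 then -1 else 0)
    else if (col.1 : ℕ) = 0 ∧ col.2.1 = row.2 then 1 else 0

/-- Matrix–vector product. -/
def mulVec {I J : Type*} [Fintype J] (M : I → J → ℝ) (v : J → ℝ) : I → ℝ :=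
  fun i => ∑ j, M i j * v j

/-- Transposed matrix–vector product `M^⊤ y`. -/
def tmulVec {I J : Type*} [Fintype I] (M : I → J → ℝ) (y : I → ℝ) : J → ℝ :=
  fun j => ∑ i, M i j * y i

/-- Euclidean inner product. -/
def dot {J : Type*} [Fintype J] (u v : J → ℝ) : ℝ := ∑ j, u j * v j

/-- View a vector indexed by `Fin (T+1) × S × A` as a time-indexed family. -/
def toFam (T : ℕ) (d : Fin (T + 1) × S × A → ℝ) : ℕ → S × A → ℝ :=
  fun t sa => if h : t < T + 1 then d (⟨t, h⟩, sa.1, sa.2) else 0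

/-- View a time-indexed family as a vector indexed by `Fin (T+1) × S × A`. -/
def toVec (T : ℕ) (d : ℕ → S × A → ℝ) : Fin (T + 1) × S × A → ℝ :=
  fun x => d (x.1 : ℕ) (x.2.1, x.2.2)

/-- `π ∈ Π(d)`: `π` is a policy inducing the occupation measure `d` wherever
`d` puts positive mass on a state. -/
def InPi (T : ℕ) (d : ℕ → S × A → ℝ) (π : ℕ → S → A → ℝ) : Prop :=
  IsPolicy π ∧ ∀ t ≤ T, ∀ s a, 0 < ∑ a' : A, d t (s, a') →
    π t s a = d t (s, a) / ∑ a' : A, d t (s, a')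

/-- Feasibility for the linear program `LP(L)`. -/
def LPFeasible [DecidableEq S] (T k : ℕ) (μ0 : S → ℝ)
    (p : ℕ → S → A → (S × A → ℝ) → S → ℝ)
    (c : ℕ → S → A → (S × A → ℝ) → Fin k → ℝ) (γ0 : Fin k → ℝ)
    (L : ℕ → S × A → ℝ) (d : Fin (T + 1) × S × A → ℝ) : Prop :=
  mulVec (ALmat T p L) d = bvec T μ0 ∧ (∀ i, dot (cLmat T k c L i) d ≤ γ0 i) ∧ ∀ x, 0 ≤ d x

/-- Optimality for the linear program `LP(L)` (minimizing `-r_L^⊤ d`). -/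
def LPOptimal [DecidableEq S] (T k : ℕ) (μ0 : S → ℝ)
    (p : ℕ → S → A → (S × A → ℝ) → S → ℝ) (r : ℕ → S → A → (S × A → ℝ) → ℝ)
    (c : ℕ → S → A → (S × A → ℝ) → Fin k → ℝ) (γ0 : Fin k → ℝ)
    (L : ℕ → S × A → ℝ) (d : Fin (T + 1) × S × A → ℝ) : Prop :=
  LPFeasible T k μ0 p c γ0 L d ∧
    ∀ d', LPFeasible T k μ0 p c γ0 L d' → dot (rLvec T r L) d' ≤ dot (rLvec T r L) d

/-- The KKT system `𝒦(L)` associated with `LP(L)`. -/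
def KKT [DecidableEq S] (T k : ℕ) (μ0 : S → ℝ)
    (p : ℕ → S → A → (S × A → ℝ) → S → ℝ) (r : ℕ → S → A → (S × A → ℝ) → ℝ)
    (c : ℕ → S → A → (S × A → ℝ) → Fin k → ℝ) (γ0 : Fin k → ℝ) (L : ℕ → S × A → ℝ)
    (d : Fin (T + 1) × S × A → ℝ) (y : Fin (T + 1) × S → ℝ)
    (z : Fin (T + 1) × S × A → ℝ) (lam : Fin k → ℝ) : Prop :=
  (∀ x, -(rLvec T r L x) =
      tmulVec (ALmat T p L) y x + z x - ∑ i, cLmat T k c L i x * lam i) ∧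
  mulVec (ALmat T p L) d = bvec T μ0 ∧
  (∀ i, dot (cLmat T k c L i) d ≤ γ0 i) ∧ (∀ x, 0 ≤ d x) ∧
  (∀ x, 0 ≤ z x) ∧ dot z d = 0 ∧ (∀ i, 0 ≤ lam i) ∧
  (∑ i, lam i * (dot (cLmat T k c L i) d - γ0 i)) = 0

/-- The population-level KKT system `𝒦^p(L)`. -/
def PopKKT [DecidableEq S] (T : ℕ) (μ0 : S → ℝ)
    (p : ℕ → S → A → (S × A → ℝ) → S → ℝ) (r : ℕ → S → A → (S × A → ℝ) → ℝ)
    (L : ℕ → S × A → ℝ) (d : Fin (T + 1) × S × A → ℝ) (y : Fin (T + 1) × S → ℝ)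
    (z : Fin (T + 1) × S × A → ℝ) : Prop :=
  (∀ x, -(rLvec T r L x) = tmulVec (ALmat T p L) y x + z x) ∧
  mulVec (ALmat T p L) d = bvec T μ0 ∧ (∀ x, 0 ≤ d x) ∧ (∀ x, 0 ≤ z x) ∧ dot z d = 0

/-- Bound for the dual variable `y` in CMFOMO. -/
noncomputable def yBound (cardS T : ℕ) (rmax cmax δ : ℝ) : ℝ :=
  (cardS : ℝ) * ((T : ℝ) + 1) * ((T : ℝ) + 2) / 2 * rmax * (1 + ((T : ℝ) + 1) / δ * cmax)

/-- Bound for the dual variable `z` in CMFOMO. -/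
noncomputable def zBound (cardS cardA T : ℕ) (rmax cmax δ : ℝ) : ℝ :=
  (cardS : ℝ) * (cardA : ℝ) * (((T : ℝ) + 1) ^ 2 - ((T : ℝ) + 1) + 2) * rmax *
    (1 + ((T : ℝ) + 1) / δ * cmax)

/-- Bound for the multiplier `λ` in CMFOMO. -/
noncomputable def lamBound (T : ℕ) (rmax δ : ℝ) : ℝ := ((T : ℝ) + 1) * rmax / δ

/-- The feasible region of the CMFOMO optimization problem. -/
noncomputable def CMFOMOFeasible (T k : ℕ) (rmax cmax δ : ℝ) (γ0 : Fin k → ℝ)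
    (Lv : Fin (T + 1) × S × A → ℝ) (y : Fin (T + 1) × S → ℝ)
    (z : Fin (T + 1) × S × A → ℝ) (lam w : Fin k → ℝ) : Prop :=
  (∀ x, 0 ≤ Lv x) ∧ (∀ t : Fin (T + 1), ∑ sa : S × A, Lv (t, sa.1, sa.2) = 1) ∧
  norm1 y ≤ yBound (Fintype.card S) T rmax cmax δ ∧
  (∀ x, 0 ≤ z x) ∧ norm1 z ≤ zBound (Fintype.card S) (Fintype.card A) T rmax cmax δ ∧
  (∀ i, 0 ≤ lam i ∧ lam i ≤ lamBound T rmax δ) ∧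
  (∀ i, 0 ≤ w i ∧ w i ≤ γ0 i)

/-- The CMFOMO objective function. -/
noncomputable def CMFOMOObj [DecidableEq S] (T k : ℕ) (μ0 : S → ℝ)
    (p : ℕ → S → A → (S × A → ℝ) → S → ℝ) (r : ℕ → S → A → (S × A → ℝ) → ℝ)
    (c : ℕ → S → A → (S × A → ℝ) → Fin k → ℝ) (γ0 : Fin k → ℝ)
    (c1 c2 c3 c4 c5 : ℝ) (Lv : Fin (T + 1) × S × A → ℝ) (y : Fin (T + 1) × S → ℝ)
    (z : Fin (T + 1) × S × A → ℝ) (lam w : Fin k → ℝ) : ℝ :=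
  c1 * norm2 (fun x => tmulVec (ALmat T p (toFam T Lv)) y x + z x +
        rLvec T r (toFam T Lv) x - ∑ i, cLmat T k c (toFam T Lv) i x * lam i) +
  c2 * norm2 (fun row => mulVec (ALmat T p (toFam T Lv)) Lv row - bvec T μ0 row) +
  c3 * dot z Lv +
  c4 * norm2 (fun i => γ0 i - dot (cLmat T k c (toFam T Lv) i) Lv - w i) +
  c5 * |∑ i, lam i * (γ0 i - dot (cLmat T k c (toFam T Lv) i) Lv)|

/-- The feasible region of the population-level CMFOMO problem. -/
noncomputable def PopCMFOMOFeasible (T k : ℕ) (rmax : ℝ) (γ0 : Fin k → ℝ)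
    (Lv : Fin (T + 1) × S × A → ℝ) (y : Fin (T + 1) × S → ℝ)
    (z : Fin (T + 1) × S × A → ℝ) (w : Fin k → ℝ) : Prop :=
  (∀ x, 0 ≤ Lv x) ∧ (∀ t : Fin (T + 1), ∑ sa : S × A, Lv (t, sa.1, sa.2) = 1) ∧
  norm1 y ≤ (Fintype.card S : ℝ) * ((T : ℝ) + 1) * ((T : ℝ) + 2) / 2 * rmax ∧
  (∀ x, 0 ≤ z x) ∧
  norm1 z ≤ (Fintype.card S : ℝ) * (Fintype.card A : ℝ) *
      (((T : ℝ) + 1) ^ 2 - ((T : ℝ) + 1) + 2) * rmax ∧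
  (∀ i, 0 ≤ w i ∧ w i ≤ γ0 i)

/-- The population-level CMFOMO objective function. -/
noncomputable def PopCMFOMOObj [DecidableEq S] (T k : ℕ) (μ0 : S → ℝ)
    (p : ℕ → S → A → (S × A → ℝ) → S → ℝ) (r : ℕ → S → A → (S × A → ℝ) → ℝ)
    (cp : ℕ → (S × A → ℝ) → Fin k → ℝ) (γ0 : Fin k → ℝ)
    (c1 c2 c3 c4 : ℝ) (Lv : Fin (T + 1) × S × A → ℝ) (y : Fin (T + 1) × S → ℝ)
    (z : Fin (T + 1) × S × A → ℝ) (w : Fin k → ℝ) : ℝ :=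
  c1 * norm2 (fun x => tmulVec (ALmat T p (toFam T Lv)) y x + z x + rLvec T r (toFam T Lv) x) +
  c2 * norm2 (fun row => mulVec (ALmat T p (toFam T Lv)) Lv row - bvec T μ0 row) +
  c3 * dot z Lv +
  c4 * norm2 (fun i => γ0 i -
    dot (cLmat T k (fun t _ _ m => cp t m) (toFam T Lv) i) Lv - w i)

/-- The optimal value `V*_c(L)` of the constrained MDP `CMDP(L)`. -/
noncomputable def Vstar (T k : ℕ) (μ0 : S → ℝ) (p : ℕ → S → A → (S × A → ℝ) → S → ℝ)
    (r : ℕ → S → A → (S × A → ℝ) → ℝ) (c : ℕ → S → A → (S × A → ℝ) → Fin k → ℝ)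
    (γ0 : Fin k → ℝ) (L : ℕ → S × A → ℝ) : ℝ :=
  sSup {v | ∃ π, IsPolicy π ∧ (∀ i, Cost T k μ0 p c π L i ≤ γ0 i) ∧ v = V T μ0 p r π L}

/-- The optimal value of the unconstrained MDP `MDP(L)`. -/
noncomputable def VstarU (T : ℕ) (μ0 : S → ℝ) (p : ℕ → S → A → (S × A → ℝ) → S → ℝ)
    (r : ℕ → S → A → (S × A → ℝ) → ℝ) (L : ℕ → S × A → ℝ) : ℝ :=
  sSup {v | ∃ π, IsPolicy π ∧ v = V T μ0 p r π L}

/-- The optimality gap `G_opt(π)`. -/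
noncomputable def Gopt (T k : ℕ) (μ0 : S → ℝ) (p : ℕ → S → A → (S × A → ℝ) → S → ℝ)
    (r : ℕ → S → A → (S × A → ℝ) → ℝ) (c : ℕ → S → A → (S × A → ℝ) → Fin k → ℝ)
    (γ0 : Fin k → ℝ) (π : ℕ → S → A → ℝ) : ℝ :=
  Vstar T k μ0 p r c γ0 (psiInd μ0 p π) - V T μ0 p r π (psiInd μ0 p π)

/-- The feasibility gap `G_fea(π)`. -/
noncomputable def Gfea (T k : ℕ) (μ0 : S → ℝ) (p : ℕ → S → A → (S × A → ℝ) → S → ℝ)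
    (c : ℕ → S → A → (S × A → ℝ) → Fin k → ℝ) (γ0 : Fin k → ℝ)
    (π : ℕ → S → A → ℝ) : ℝ :=
  norm2 (fun i : Fin k => min 0 (γ0 i - Cost T k μ0 p c π (psiInd μ0 p π) i))

/-- The population-level optimality gap. -/
noncomputable def GoptPop (T : ℕ) (μ0 : S → ℝ) (p : ℕ → S → A → (S × A → ℝ) → S → ℝ)
    (r : ℕ → S → A → (S × A → ℝ) → ℝ) (π : ℕ → S → A → ℝ) : ℝ :=
  VstarU T μ0 p r (psiInd μ0 p π) - V T μ0 p r π (psiInd μ0 p π)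

/-- The population-level feasibility gap. -/
noncomputable def GfeaPop (T k : ℕ) (μ0 : S → ℝ) (p : ℕ → S → A → (S × A → ℝ) → S → ℝ)
    (cp : ℕ → (S × A → ℝ) → Fin k → ℝ) (γ0 : Fin k → ℝ) (π : ℕ → S → A → ℝ) : ℝ :=
  norm2 (fun i : Fin k =>
    min 0 (γ0 i - ∑ t ∈ Finset.range (T + 1), cp t (psiInd μ0 p π t) i))

section NPlayer

variable [DecidableEq S] [DecidableEq A]

/-- Empirical state-action distribution of `N` players. -/
noncomputable def emp (N : ℕ) (x : Fin N → S × A) : S × A → ℝ :=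
  fun sa => (∑ i, if x i = sa then (1 : ℝ) else 0) / (N : ℝ)

/-- The joint law, at each time `t`, of the state-action profile of the `N` players
under the policy profile `πv`. -/
noncomputable def jointLaw (N : ℕ) (μ0 : S → ℝ) (p : ℕ → S → A → (S × A → ℝ) → S → ℝ)
    (πv : Fin N → ℕ → S → A → ℝ) : ℕ → (Fin N → S × A) → ℝ
  | 0 => fun x => ∏ i, μ0 (x i).1 * πv i 0 (x i).1 (x i).2
  | t + 1 => fun x => ∑ x' : Fin N → S × A, jointLaw N μ0 p πv t x' *
      ∏ i, p t (x' i).1 (x' i).2 (emp N x') (x i).1 * πv i (t + 1) (x i).1 (x i).2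

/-- Expected cumulative reward `V^{(i)}` of player `i` in the `N`-player game. -/
noncomputable def Vplayer (N T : ℕ) (μ0 : S → ℝ) (p : ℕ → S → A → (S × A → ℝ) → S → ℝ)
    (r : ℕ → S → A → (S × A → ℝ) → ℝ) (πv : Fin N → ℕ → S → A → ℝ) (i : Fin N) : ℝ :=
  ∑ t ∈ Finset.range (T + 1), ∑ x : Fin N → S × A,
    jointLaw N μ0 p πv t x * r t (x i).1 (x i).2 (emp N x)

/-- Expected cumulative cost `γ^{(i)}` of player `i` in the `N`-player game. -/
noncomputable def CostPlayer (N T k : ℕ) (μ0 : S → ℝ) (p : ℕ → S → A → (S × A → ℝ) → S → ℝ)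
    (c : ℕ → S → A → (S × A → ℝ) → Fin k → ℝ) (πv : Fin N → ℕ → S → A → ℝ)
    (i : Fin N) : Fin k → ℝ :=
  fun j => ∑ t ∈ Finset.range (T + 1), ∑ x : Fin N → S × A,
    jointLaw N μ0 p πv t x * c t (x i).1 (x i).2 (emp N x) j

/-- Feasibility gap `G_fea^{(i)}` of player `i` in the `N`-player game. -/
noncomputable def GfeaPlayer (N T k : ℕ) (μ0 : S → ℝ)
    (p : ℕ → S → A → (S × A → ℝ) → S → ℝ) (c : ℕ → S → A → (S × A → ℝ) → Fin k → ℝ)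
    (γ0 : Fin k → ℝ) (πv : Fin N → ℕ → S → A → ℝ) (i : Fin N) : ℝ :=
  norm2 (fun j : Fin k => min 0 (γ0 j - CostPlayer N T k μ0 p c πv i j))

/-- `(ε1, ε2)`-Nash equilibrium of the constrained `N`-player game. -/
noncomputable def IsEpsNash (N T k : ℕ) (μ0 : S → ℝ)
    (p : ℕ → S → A → (S × A → ℝ) → S → ℝ) (r : ℕ → S → A → (S × A → ℝ) → ℝ)
    (c : ℕ → S → A → (S × A → ℝ) → Fin k → ℝ) (γ0 : Fin k → ℝ)
    (πv : Fin N → ℕ → S → A → ℝ) (ε1 ε2 : ℝ) : Prop :=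
  ∀ i : Fin N,
    (∀ π', IsPolicy π' →
      GfeaPlayer N T k μ0 p c γ0 (Function.update πv i π') i = 0 →
      Vplayer N T μ0 p r (Function.update πv i π') i ≤ Vplayer N T μ0 p r πv i + ε1) ∧
    GfeaPlayer N T k μ0 p c γ0 πv i ≤ ε2

end NPlayer


section FarkasAux


variable {ι : Type*} [Fintype ι] [DecidableEq ι]
variable {E : Type*} [NormedAddCommGroup E] [NormedSpace ℝ E]

/-- The finitely generated cone. -/
def coneSet (v : ι → E) : Set E :=
  {x | ∃ c : ι → ℝ, (∀ i, 0 ≤ c i) ∧ x = ∑ i, c i • v i}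

/-- Conic Carathéodory. -/
lemma caratheodory_aux (v : ι → E) :
    ∀ (n : ℕ) (c : ι → ℝ), (Finset.univ.filter fun i => c i ≠ 0).card ≤ n →
    (∀ i, 0 ≤ c i) →
    ∃ (s : Finset ι) (c' : ι → ℝ), LinearIndependent ℝ (fun i : s => v i) ∧
      (∀ i, 0 ≤ c' i) ∧ (∀ i ∉ s, c' i = 0) ∧ ∑ i, c' i • v i = ∑ i, c i • v i := by
  intro n
  induction n with
  | zero =>
      intro c hcard hc
      have hc0 : ∀ i, c i = 0 := by
        intro i
        by_contra h
        have : i ∈ Finset.univ.filter fun i => c i ≠ 0 := by simp [h]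
        have := Finset.card_pos.mpr ⟨i, this⟩
        omega
      refine ⟨∅, c, ?_, hc, fun i _ => hc0 i, rfl⟩
      have : IsEmpty ((∅ : Finset ι) : Set ι) := by simp
      exact linearIndependent_empty_type
  | succ n ih =>
      intro c hcard hc
      set s : Finset ι := Finset.univ.filter fun i => c i ≠ 0 with hs
      by_cases hli : LinearIndependent ℝ (fun i : s => v i)
      · exact ⟨s, c, hli, hc, fun i hi => by simpa [hs] using hi, rfl⟩
      · obtain ⟨g, hgsum, j0, hgj0⟩ := Fintype.not_linearIndependent_iff.mp hli
        -- extend g to ι, ensuring a positive entry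
        have key : ∀ g : s → ℝ, (∑ i : s, g i • v i = 0) → (∃ j : s, 0 < g j) →
            ∃ (s' : Finset ι) (c' : ι → ℝ), LinearIndependent ℝ (fun i : s' => v i) ∧
              (∀ i, 0 ≤ c' i) ∧ (∀ i ∉ s', c' i = 0) ∧
              ∑ i, c' i • v i = ∑ i, c i • v i := by
          intro g hgsum hpos
          classical
          set gh : ι → ℝ := fun i => if h : i ∈ s then g ⟨i, h⟩ else 0 with hgh
          have hghsum : ∑ i, gh i • v i = 0 := by
            have h1 : ∑ i, gh i • v i = ∑ i ∈ s, gh i • v i :=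
              (Finset.sum_subset (Finset.subset_univ s)
                (fun i _ hi => by simp [hgh, hi])).symm
            have h2 : ∑ i ∈ s, gh i • v i = ∑ i : s, g i • v i := by
              rw [← Finset.sum_attach s (fun i => gh i • v i)]
              exact Finset.sum_congr rfl fun i _ => by simp [hgh, i.2]
            rw [h1, h2, hgsum]
          -- the positive-part index set
          set P : Finset ι := s.filter (fun i => 0 < gh i) with hP
          have hPne : P.Nonempty := by
            obtain ⟨j, hj⟩ := hpos
            exact ⟨j, by simp [hP, hgh, j.2, hj]⟩
          obtain ⟨i0, hi0P, hi0⟩ := Finset.exists_mem_eq_inf' hPne (fun i => c i / gh i)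
          set t : ℝ := c i0 / gh i0 with ht
          have hi0s : i0 ∈ s := (Finset.mem_filter.mp hi0P).1
          have hgh0 : 0 < gh i0 := (Finset.mem_filter.mp hi0P).2
          have htnn : 0 ≤ t := div_nonneg (hc i0) hgh0.le
          set c' : ι → ℝ := fun i => c i - t * gh i with hc'
          have hc'nn : ∀ i, 0 ≤ c' i := by
            intro i
            by_cases hgi : 0 < gh i
            · have his : i ∈ s := by
                by_contra h; simp [hgh, h] at hgi
              have hiP : i ∈ P := by simp [hP, his, hgi]
              have : t ≤ c i / gh i := hi0 ▸ Finset.inf'_le _ hiP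
              have := (le_div_iff₀ hgi).mp this
              simp [hc']; linarith
            · push_neg at hgi
              have : t * gh i ≤ 0 := mul_nonpos_of_nonneg_of_nonpos htnn hgi
              simp [hc']; nlinarith [hc i]
          have hc'i0 : c' i0 = 0 := by
            simp [hc', ht]
            field_simp
            ring
          have hsupp : (Finset.univ.filter fun i => c' i ≠ 0) ⊆ s.erase i0 := by
            intro i hi
            simp only [Finset.mem_filter, Finset.mem_univ, true_and] at hi
            rw [Finset.mem_erase]
            constructor
            · rintro rfl; exact hi hc'i0
            · by_contra h
              have hci : c i = 0 := by
                by_contra h'; exact h (by simp [hs, h'])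
              have hgi : gh i = 0 := by simp [hgh, h]
              exact hi (by simp [hc', hci, hgi])
          have hcard' : (Finset.univ.filter fun i => c' i ≠ 0).card ≤ n := by
            have h1 := Finset.card_le_card hsupp
            have h2 : (s.erase i0).card < s.card := Finset.card_erase_lt_of_mem hi0s
            omega
          have hsum' : ∑ i, c' i • v i = ∑ i, c i • v i := by
            simp only [hc', sub_smul, mul_smul, Finset.sum_sub_distrib]
            rw [← Finset.smul_sum, hghsum, smul_zero, sub_zero]
          obtain ⟨s', c'', h1, h2, h3, h4⟩ := ih c' hcard' hc'nn
          exact ⟨s', c'', h1, h2, h3, h4.trans hsum'⟩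
        by_cases hposs : ∃ j : s, 0 < g j
        · exact key g hgsum hposs
        · apply key (fun i => - g i)
          · simp [hgsum, ← Finset.sum_neg_distrib]
            rw [← neg_zero, ← hgsum]
            simp [Finset.sum_neg_distrib]
          · push_neg at hposs
            refine ⟨j0, ?_⟩
            have := hposs j0
            cases lt_or_eq_of_le this with
            | inl h => linarith
            | inr h => exact absurd h hgj0

lemma sum_extend {M : Type*} [AddCommMonoid M] (s : Finset ι) (F : ↥s → M) :
    ∑ i : ι, (if h : i ∈ s then F ⟨i, h⟩ else 0) = ∑ i : ↥s, F i := by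
  rw [← Finset.sum_subset (Finset.subset_univ s)
      (fun i _ hi => dif_neg hi),
      ← Finset.sum_attach s (fun i => if h : i ∈ s then F ⟨i, h⟩ else 0),
      ← Finset.univ_eq_attach]
  exact Finset.sum_congr rfl fun i _ => by simp

lemma isClosed_coneSet [FiniteDimensional ℝ E] (v : ι → E) : IsClosed (coneSet v) := by
  classical
  have hrepr : coneSet v = ⋃ (s : Finset ι) (_ : LinearIndependent ℝ (fun i : s => v i)),
      {x | ∃ c : ι → ℝ, (∀ i, 0 ≤ c i) ∧ (∀ i ∉ s, c i = 0) ∧ x = ∑ i, c i • v i} := by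
    ext x
    simp only [Set.mem_iUnion, coneSet, Set.mem_setOf_eq]
    constructor
    · rintro ⟨c, hc, rfl⟩
      obtain ⟨s, c', h1, h2, h3, h4⟩ :=
        caratheodory_aux v (Finset.univ.filter fun i => c i ≠ 0).card c le_rfl hc
      exact ⟨s, h1, c', h2, h3, h4.symm⟩
    · rintro ⟨s, _, c, hc, _, rfl⟩
      exact ⟨c, hc, rfl⟩
  rw [hrepr]
  apply isClosed_iUnion_of_finite
  intro s
  apply isClosed_iUnion_of_finite
  intro hli
  -- this set is the image of the nonneg orthant under an injective linear map
  set f : (↥s → ℝ) →ₗ[ℝ] E := Fintype.linearCombination ℝ (fun i : s => v i) with hf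
  have himg : {x | ∃ c : ι → ℝ, (∀ i, 0 ≤ c i) ∧ (∀ i ∉ s, c i = 0) ∧ x = ∑ i, c i • v i}
      = f '' {c | ∀ i, 0 ≤ c i} := by
    ext x
    simp only [Set.mem_setOf_eq, Set.mem_image, hf, Fintype.linearCombination_apply]
    constructor
    · rintro ⟨c, hc, hsupp, rfl⟩
      refine ⟨fun i => c i, fun i => hc i, ?_⟩
      rw [← sum_extend s (fun i : ↥s => c ↑i • v ↑i)]
      exact Finset.sum_congr rfl fun i _ => by
        by_cases h : i ∈ s
        · simp [h]
        · simp [h, hsupp i h]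
    · rintro ⟨c, hc, rfl⟩
      refine ⟨fun i => if h : i ∈ s then c ⟨i, h⟩ else 0, fun i => ?_,
        fun i hi => by simp [hi], ?_⟩
      · by_cases h : i ∈ s
        · simpa [h] using hc ⟨i, h⟩
        · simp [h]
      · rw [← sum_extend s (fun i : ↥s => c i • v ↑i)]
        exact Finset.sum_congr rfl fun i _ => by
          by_cases h : i ∈ s
          · simp [h]
          · simp [h]
  rw [himg]
  have hinj : LinearMap.ker f = ⊥ := by
    rw [LinearMap.ker_eq_bot']
    intro c hc
    rw [hf] at hc
    simp only [Fintype.linearCombination_apply] at hc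
    exact funext (Fintype.linearIndependent_iff.mp hli c hc)
  have hemb := LinearMap.isClosedEmbedding_of_injective hinj
  apply hemb.isClosedMap
  have : {c : ↥s → ℝ | ∀ i, 0 ≤ c i} = Set.Ici 0 := by
    ext c
    exact ⟨fun h => Set.mem_Ici.mpr (Pi.le_def.mpr h),
      fun h i => Pi.le_def.mp (Set.mem_Ici.mp h) i⟩
  rw [this]; exact isClosed_Ici

open scoped InnerProductSpace in
lemma farkas {H : Type*} [NormedAddCommGroup H] [InnerProductSpace ℝ H]
    [FiniteDimensional ℝ H] (v : ι → H) (g : H)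
    (hyp : ∀ x : H, (∀ i, 0 ≤ ⟪v i, x⟫_ℝ) → 0 ≤ ⟪g, x⟫_ℝ) :
    ∃ c : ι → ℝ, (∀ i, 0 ≤ c i) ∧ g = ∑ i, c i • v i := by
  classical
  by_contra hcon
  have hg : g ∉ coneSet v := fun ⟨c, h1, h2⟩ => hcon ⟨c, h1, h2⟩
  set K : ConvexCone ℝ H :=
    { carrier := coneSet v
      smul_mem' := by
        rintro t ht x ⟨c, hc, rfl⟩
        exact ⟨fun i => t * c i, fun i => mul_nonneg ht.le (hc i), by
          simp [Finset.smul_sum, mul_smul]⟩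
      add_mem' := by
        rintro x ⟨c, hc, rfl⟩ y ⟨c', hc', rfl⟩
        exact ⟨fun i => c i + c' i, fun i => add_nonneg (hc i) (hc' i), by
          simp [add_smul, Finset.sum_add_distrib]⟩ } with hK
  have hne : (K : Set H).Nonempty := ⟨0, ⟨fun _ => 0, fun _ => le_rfl, by simp⟩⟩
  have hcl : IsClosed (K : Set H) := isClosed_coneSet v
  obtain ⟨y, hy1, hy2⟩ :
      ∃ y, (∀ x ∈ (K : Set H), 0 ≤ ⟪x, y⟫_ℝ) ∧ ⟪y, g⟫_ℝ < 0 := by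
    obtain ⟨y, h1, h2⟩ := ProperCone.hyperplane_separation'
      (⟨K.toPointedCone (⟨fun _ => 0, fun _ => le_rfl, by simp⟩ : (0 : H) ∈ coneSet v), hcl⟩ :
        ProperCone ℝ H) hg
    exact ⟨y, h1, by rwa [real_inner_comm]⟩
  have hvy : ∀ i, 0 ≤ ⟪v i, y⟫_ℝ := by
    intro i
    apply hy1
    refine ⟨fun j => if j = i then 1 else 0, fun j => by positivity, ?_⟩
    simp [ite_smul]
  have := hyp y hvy
  rw [real_inner_comm] at hy2
  linarith

open scoped InnerProductSpace

lemma farkas_dot {J : Type*} [Fintype J] (v : ι → J → ℝ) (g : J → ℝ)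
    (hyp : ∀ x : J → ℝ, (∀ i, 0 ≤ ∑ j, v i j * x j) → 0 ≤ ∑ j, g j * x j) :
    ∃ c : ι → ℝ, (∀ i, 0 ≤ c i) ∧ ∀ j, g j = ∑ i, c i * v i j := by
  classical
  have hinner : ∀ a b : EuclideanSpace ℝ J, ⟪a, b⟫_ℝ = ∑ j, a j * b j := by
    intro a b
    simp [PiLp.inner_apply, RCLike.inner_apply, mul_comm]
  obtain ⟨c, hc, hsum⟩ := farkas (H := EuclideanSpace ℝ J)
    (fun i => WithLp.toLp 2 (v i)) (WithLp.toLp 2 g) (by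
      intro x hx
      rw [hinner]
      apply hyp (fun j => x j)
      intro i
      have := hx i
      rwa [hinner] at this)
  refine ⟨c, hc, fun j => ?_⟩
  have := congrArg (fun w : EuclideanSpace ℝ J => w j) hsum
  simpa [Finset.sum_apply] using this

/-- Existence of KKT multipliers at an optimum of a linear program. -/
lemma kkt_exists {m J : Type*} [Fintype m] [Fintype J] [DecidableEq m] [DecidableEq J]
    [Nonempty J] {k : ℕ}
    (Amat : m → J → ℝ) (Cmat : Fin k → J → ℝ) (r : J → ℝ) (b : m → ℝ) (γ : Fin k → ℝ)
    (d : J → ℝ)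
    (hfA : ∀ row, ∑ j, Amat row j * d j = b row)
    (hfC : ∀ i, ∑ j, Cmat i j * d j ≤ γ i)
    (hfP : ∀ j, 0 ≤ d j)
    (hopt : ∀ d' : J → ℝ, (∀ row, ∑ j, Amat row j * d' j = b row) →
      (∀ i, ∑ j, Cmat i j * d' j ≤ γ i) → (∀ j, 0 ≤ d' j) →
      ∑ j, r j * d' j ≤ ∑ j, r j * d j) :
    ∃ (y : m → ℝ) (z : J → ℝ) (lam : Fin k → ℝ),
      (∀ x, -(r x) = (∑ row, Amat row x * y row) + z x - ∑ i, Cmat i x * lam i) ∧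
      (∀ x, 0 ≤ z x) ∧ (∑ j, z j * d j) = 0 ∧ (∀ i, 0 ≤ lam i) ∧
      (∑ i, lam i * ((∑ j, Cmat i j * d j) - γ i)) = 0 := by
  classical
  -- generators
  set v : (m ⊕ m ⊕ Fin k ⊕ J) → J → ℝ := fun i =>
    match i with
    | Sum.inl row => Amat row
    | Sum.inr (Sum.inl row) => fun j => -(Amat row j)
    | Sum.inr (Sum.inr (Sum.inl i)) =>
        if (∑ j, Cmat i j * d j) = γ i then (fun j => -(Cmat i j)) else 0
    | Sum.inr (Sum.inr (Sum.inr j0)) =>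
        if d j0 = 0 then (fun j => if j = j0 then 1 else 0) else 0
    with hv
  have hyp : ∀ x : J → ℝ, (∀ i, 0 ≤ ∑ j, v i j * x j) → 0 ≤ ∑ j, (-(r j)) * x j := by
    intro x hx
    have hAx : ∀ row, ∑ j, Amat row j * x j = 0 := by
      intro row
      have h1 := hx (Sum.inl row)
      have h2 := hx (Sum.inr (Sum.inl row))
      simp only [hv] at h1 h2
      simp only [neg_mul, Finset.sum_neg_distrib] at h2
      linarith
    have hCx : ∀ i, (∑ j, Cmat i j * d j) = γ i → ∑ j, Cmat i j * x j ≤ 0 := by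
      intro i hact
      have h1 := hx (Sum.inr (Sum.inr (Sum.inl i)))
      simp only [hv, hact, if_pos] at h1
      simp only [neg_mul, Finset.sum_neg_distrib] at h1
      linarith
    have hxP : ∀ j0, d j0 = 0 → 0 ≤ x j0 := by
      intro j0 h0
      have h1 := hx (Sum.inr (Sum.inr (Sum.inr j0)))
      simp only [hv, h0, if_pos] at h1
      rwa [Finset.sum_eq_single j0 (fun b _ hb => by simp [hb]) (by simp), if_pos rfl,
        one_mul] at h1
    -- construct a positive step size ε
    set φ : Fin k ⊕ J → ℝ := Sum.elim
      (fun i => if 0 < ∑ j, Cmat i j * x j then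
          (γ i - ∑ j, Cmat i j * d j) / (∑ j, Cmat i j * x j) else 1)
      (fun j => if x j < 0 then d j / (- x j) else 1) with hφ
    have hne : (Finset.univ : Finset (Fin k ⊕ J)).Nonempty :=
      ⟨Sum.inr (Classical.arbitrary J), Finset.mem_univ _⟩
    set ε : ℝ := min 1 (Finset.univ.inf' hne φ) with hε
    have hφpos : ∀ u, 0 < φ u := by
      rintro (i | j)
      · simp only [hφ, Sum.elim_inl]
        split_ifs with h
        · have hslack : (∑ j, Cmat i j * d j) < γ i := by
            rcases lt_or_eq_of_le (hfC i) with h' | h'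
            · exact h'
            · exact absurd (hCx i h') (not_le.mpr h)
          exact div_pos (by linarith) h
        · exact one_pos
      · simp only [hφ, Sum.elim_inr]
        split_ifs with h
        · have hdj : 0 < d j := by
            rcases lt_or_eq_of_le (hfP j) with h' | h'
            · exact h'
            · exact absurd (hxP j h'.symm) (not_le.mpr h)
          exact div_pos hdj (by linarith)
        · exact one_pos
    have hεpos : 0 < ε := lt_min one_pos ((Finset.lt_inf'_iff hne).mpr fun u _ => hφpos u)
    have hεle : ∀ u, ε ≤ φ u := fun u =>
      le_trans (min_le_right _ _) (Finset.inf'_le _ (Finset.mem_univ u))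
    -- the perturbed point is feasible
    set d' : J → ℝ := fun j => d j + ε * x j with hd'
    have hfA' : ∀ row, ∑ j, Amat row j * d' j = b row := by
      intro row
      simp only [hd', mul_add, Finset.sum_add_distrib]
      rw [hfA row]
      have : ∑ j, Amat row j * (ε * x j) = ε * ∑ j, Amat row j * x j := by
        rw [Finset.mul_sum]; exact Finset.sum_congr rfl fun j _ => by ring
      rw [this, hAx row, mul_zero, add_zero]
    have hfC' : ∀ i, ∑ j, Cmat i j * d' j ≤ γ i := by
      intro i
      have hexp : ∑ j, Cmat i j * d' j
          = (∑ j, Cmat i j * d j) + ε * ∑ j, Cmat i j * x j := by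
        simp only [hd', mul_add, Finset.sum_add_distrib, Finset.mul_sum]
        congr 1
        exact Finset.sum_congr rfl fun j _ => by ring
      rw [hexp]
      rcases le_or_gt (∑ j, Cmat i j * x j) 0 with h | h
      · nlinarith [hfC i, hεpos]
      · have := hεle (Sum.inl i)
        simp only [hφ, Sum.elim_inl, if_pos h] at this
        have := (le_div_iff₀ h).mp this
        linarith
    have hfP' : ∀ j, 0 ≤ d' j := by
      intro j
      simp only [hd']
      rcases le_or_gt 0 (x j) with h | h
      · nlinarith [hfP j, hεpos]
      · have := hεle (Sum.inr j)
        simp only [hφ, Sum.elim_inr, if_pos h] at this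
        have := (le_div_iff₀ (by linarith : (0:ℝ) < - x j)).mp this
        nlinarith
    have h := hopt d' hfA' hfC' hfP'
    have hexp : ∑ j, r j * d' j = (∑ j, r j * d j) + ε * ∑ j, r j * x j := by
      simp only [hd', mul_add, Finset.sum_add_distrib, Finset.mul_sum]
      congr 1
      exact Finset.sum_congr rfl fun j _ => by ring
    rw [hexp] at h
    have hrx : ∑ j, r j * x j ≤ 0 := by nlinarith
    simp only [neg_mul, Finset.sum_neg_distrib]
    linarith
  obtain ⟨c, hc, hg⟩ := farkas_dot v (fun j => -(r j)) hyp
  refine ⟨fun row => c (Sum.inl row) - c (Sum.inr (Sum.inl row)),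
    fun j0 => if d j0 = 0 then c (Sum.inr (Sum.inr (Sum.inr j0))) else 0,
    fun i => if (∑ j, Cmat i j * d j) = γ i then c (Sum.inr (Sum.inr (Sum.inl i))) else 0,
    ?_, ?_, ?_, ?_, ?_⟩
  · intro x
    have hgx := hg x
    rw [hgx, Fintype.sum_sum_type, Fintype.sum_sum_type, Fintype.sum_sum_type]
    have e4 : ∑ j0, c (Sum.inr (Sum.inr (Sum.inr j0))) * v (Sum.inr (Sum.inr (Sum.inr j0))) x
        = (if d x = 0 then c (Sum.inr (Sum.inr (Sum.inr x))) else 0) := by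
      rw [Finset.sum_eq_single x]
      · simp only [hv]
        split_ifs with h
        · simp
        · simp
      · intro j0 _ hj0
        simp only [hv]
        split_ifs with h
        · simp [Ne.symm hj0]
        · simp
      · simp
    have e3 : ∑ i, c (Sum.inr (Sum.inr (Sum.inl i))) * v (Sum.inr (Sum.inr (Sum.inl i))) x
        = - ∑ i, Cmat i x *
            (if (∑ j, Cmat i j * d j) = γ i then c (Sum.inr (Sum.inr (Sum.inl i))) else 0) := by
      rw [← Finset.sum_neg_distrib]
      apply Finset.sum_congr rfl
      intro i _
      simp only [hv]
      split_ifs with h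
      · simp only [Pi.neg_apply]
        ring
      · simp
    have e1 : ∀ row, v (Sum.inl row) x = Amat row x := fun _ => rfl
    have e2 : ∀ row, v (Sum.inr (Sum.inl row)) x = -(Amat row x) := fun _ => rfl
    rw [e4, e3]
    simp only [e1, e2]
    have esplit : ∑ row, Amat row x * (c (Sum.inl row) - c (Sum.inr (Sum.inl row)))
        = (∑ row, c (Sum.inl row) * Amat row x)
          - ∑ row, c (Sum.inr (Sum.inl row)) * Amat row x := by
      rw [← Finset.sum_sub_distrib]
      exact Finset.sum_congr rfl fun row _ => by ring
    have enegg : ∑ row, c (Sum.inr (Sum.inl row)) * -(Amat row x)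
        = - ∑ row, c (Sum.inr (Sum.inl row)) * Amat row x := by
      rw [← Finset.sum_neg_distrib]
      exact Finset.sum_congr rfl fun row _ => by ring
    rw [enegg, esplit]
    ring
  · intro x; dsimp only; split_ifs; exacts [hc _, le_rfl]
  · apply Finset.sum_eq_zero
    intro j _
    dsimp only
    split_ifs with h
    · rw [h, mul_zero]
    · rw [zero_mul]
  · intro i; dsimp only; split_ifs; exacts [hc _, le_rfl]
  · apply Finset.sum_eq_zero
    intro i _
    dsimp only
    split_ifs with h
    · rw [h, sub_self, mul_zero]
    · rw [zero_mul]

end FarkasAux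

section CorrAux

/-- Reformulation of the `A_L d` product. -/
lemma mulVec_ALmat [DecidableEq S] (T : ℕ) (p : ℕ → S → A → (S × A → ℝ) → S → ℝ)
    (L : ℕ → S × A → ℝ) (d : Fin (T + 1) × S × A → ℝ) (row : Fin (T + 1) × S) :
    mulVec (ALmat T p L) d row =
      if h : (row.1 : ℕ) < T then
        (∑ sa : S × A, p (row.1 : ℕ) sa.1 sa.2 (L (row.1 : ℕ)) row.2 * d (row.1, sa.1, sa.2))
          - ∑ a : A, d (⟨(row.1 : ℕ) + 1, by omega⟩, row.2, a)
      else ∑ a : A, d (⟨0, by omega⟩, row.2, a) := by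
  classical
  rw [mulVec]
  rw [Fintype.sum_prod_type]
  by_cases h : (row.1 : ℕ) < T
  · simp only [ALmat, if_pos h, dif_pos h, add_mul]
    simp only [Finset.sum_add_distrib]
    rw [sub_eq_add_neg]
    congr 1
    · -- first part
      have : ∀ u : Fin (T + 1), (∑ sa : S × A,
          (if u = row.1 then p (row.1 : ℕ) sa.1 sa.2 (L (row.1 : ℕ)) row.2 else 0) * d (u, sa))
          = if u = row.1 then
              ∑ sa : S × A, p (row.1 : ℕ) sa.1 sa.2 (L (row.1 : ℕ)) row.2 * d (u, sa.1, sa.2) else 0 := by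
        intro u
        split_ifs with hu
        · rfl
        · simp
      rw [Finset.sum_congr rfl fun u _ => this u]
      rw [Finset.sum_ite_eq' Finset.univ row.1]
      simp
    · -- second part
      set u1 : Fin (T + 1) := ⟨(row.1 : ℕ) + 1, by omega⟩ with hu1
      have hcond : ∀ (u : Fin (T + 1)) (sa : S × A),
          ((u : ℕ) = (row.1 : ℕ) + 1 ∧ sa.1 = row.2) ↔ (u = u1 ∧ sa.1 = row.2) := by
        intro u sa
        rw [Fin.ext_iff]
      have : ∀ u : Fin (T + 1), (∑ sa : S × A,
          (if (u : ℕ) = (row.1 : ℕ) + 1 ∧ sa.1 = row.2 then (-1 : ℝ) else 0) * d (u, sa))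
          = if u = u1 then - ∑ a : A, d (u, row.2, a) else 0 := by
        intro u
        rw [Fintype.sum_prod_type]
        split_ifs with hu
        · rw [← Finset.sum_neg_distrib]
          rw [Finset.sum_eq_single row.2]
          · apply Finset.sum_congr rfl
            intro a _
            simp [hu, hu1, Fin.ext_iff]
          · intro s' _ hs'
            apply Finset.sum_eq_zero
            intro a _
            simp [hs']
          · simp
        · apply Finset.sum_eq_zero
          intro s' _
          apply Finset.sum_eq_zero
          intro a _
          have : ¬((u : ℕ) = (row.1 : ℕ) + 1 ∧ s' = row.2) := by
            rintro ⟨h1, h2⟩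
            exact hu (Fin.ext h1)
          simp [this]
      rw [Finset.sum_congr rfl fun u _ => this u]
      rw [Finset.sum_ite_eq' Finset.univ u1]
      simp
  · simp only [ALmat, if_neg h, dif_neg h]
    set u0 : Fin (T + 1) := ⟨0, by omega⟩ with hu0
    have : ∀ u : Fin (T + 1), (∑ sa : S × A,
        (if (u : ℕ) = 0 ∧ sa.1 = row.2 then (1 : ℝ) else 0) * d (u, sa))
        = if u = u0 then ∑ a : A, d (u, row.2, a) else 0 := by
      intro u
      rw [Fintype.sum_prod_type]
      split_ifs with hu
      · rw [Finset.sum_eq_single row.2]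
        · apply Finset.sum_congr rfl
          intro a _
          simp [hu, hu0, Fin.ext_iff]
        · intro s' _ hs'
          apply Finset.sum_eq_zero
          intro a _
          simp [hs']
        · simp
      · apply Finset.sum_eq_zero
        intro s' _
        apply Finset.sum_eq_zero
        intro a _
        have : ¬((u : ℕ) = 0 ∧ s' = row.2) := by
          rintro ⟨h1, h2⟩
          exact hu (Fin.ext (by simp [h1, hu0]))
        simp [this]
        intro h1 h2
        exact absurd ⟨by simp [h1], h2⟩ this
    rw [Finset.sum_congr rfl fun u _ => this u]
    rw [Finset.sum_ite_eq' Finset.univ u0]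
    simp

variable {T : ℕ} {μ0 : S → ℝ} {p : ℕ → S → A → (S × A → ℝ) → S → ℝ}
  {π : ℕ → S → A → ℝ} {L : ℕ → S × A → ℝ}

lemma psi_nonneg (hμ0 : IsSimplex μ0) (hπ : IsPolicy π) (hp : IsKernel T p) (hL : IsFlow L) :
    ∀ t, t ≤ T → ∀ sa, 0 ≤ psi μ0 p π L t sa := by
  intro t
  induction t with
  | zero => exact fun _ sa => mul_nonneg ((hπ 0 sa.1).1 sa.2) (hμ0.1 sa.1)
  | succ t ih =>
      intro ht sa
      apply mul_nonneg ((hπ _ sa.1).1 sa.2)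
      apply Finset.sum_nonneg
      intro sa' _
      exact mul_nonneg ((hp t (by omega) sa'.1 sa'.2 (L t) (hL t)).1 sa.1) (ih (by omega) sa')

lemma sum_psi_zero (hπ : IsPolicy π) (s : S) :
    ∑ a, psi μ0 p π L 0 (s, a) = μ0 s := by
  show (∑ a, π 0 s a * μ0 s) = μ0 s
  rw [← Finset.sum_mul, (hπ 0 s).2, one_mul]

lemma sum_psi_succ (hπ : IsPolicy π) (t : ℕ) (s : S) :
    ∑ a, psi μ0 p π L (t + 1) (s, a)
      = ∑ sa' : S × A, p t sa'.1 sa'.2 (L t) s * psi μ0 p π L t sa' := by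
  have e : ∀ a : A, psi μ0 p π L (t + 1) (s, a)
      = π (t + 1) s a * ∑ sa' : S × A, p t sa'.1 sa'.2 (L t) s * psi μ0 p π L t sa' :=
    fun a => rfl
  rw [Finset.sum_congr rfl fun a _ => e a, ← Finset.sum_mul, (hπ (t + 1) s).2, one_mul]

lemma psi_eq_pol_mul_marg (hπ : IsPolicy π) (t : ℕ) (s : S) (a : A) :
    psi μ0 p π L t (s, a) = π t s a * ∑ a', psi μ0 p π L t (s, a') := by
  cases t with
  | zero => rw [sum_psi_zero hπ]; rfl
  | succ t => rw [sum_psi_succ hπ]; rfl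

lemma feas_psi [DecidableEq S] (hμ0 : IsSimplex μ0) (hπ : IsPolicy π) :
    ∀ row, mulVec (ALmat T p L) (toVec T (psi μ0 p π L)) row = bvec T μ0 row := by
  intro row
  rw [mulVec_ALmat]
  by_cases h : (row.1 : ℕ) < T
  · rw [dif_pos h]
    have h1 : ∑ a : A, toVec T (psi μ0 p π L) (⟨(row.1 : ℕ) + 1, by omega⟩, row.2, a)
        = ∑ sa' : S × A, p (row.1 : ℕ) sa'.1 sa'.2 (L (row.1 : ℕ)) row.2
            * psi μ0 p π L (row.1 : ℕ) sa' := by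
      exact sum_psi_succ hπ (row.1 : ℕ) row.2
    rw [h1, bvec, if_neg (by omega)]
    exact sub_self _
  · rw [dif_neg h]
    have hT : (row.1 : ℕ) = T := by have := row.1.isLt; omega
    rw [bvec, if_pos hT]
    exact sum_psi_zero hπ row.2

lemma dot_toVec (w : ℕ → S × A → ℝ) (dfam : ℕ → S × A → ℝ) :
    dot (fun x : Fin (T + 1) × S × A => w (x.1 : ℕ) x.2) (toVec T dfam)
      = ∑ t ∈ Finset.range (T + 1), ∑ sa : S × A, w t sa * dfam t sa := by
  rw [dot, Fintype.sum_prod_type, ← Fin.sum_univ_eq_sum_range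
    (fun t => ∑ sa : S × A, w t sa * dfam t sa) (T + 1)]
  rfl

/-- The canonical policy induced by a time-indexed family of measures. -/
noncomputable def polOf (dfam : ℕ → S × A → ℝ) : ℕ → S → A → ℝ :=
  fun t s a => if 0 < ∑ a' : A, dfam t (s, a') then dfam t (s, a) / ∑ a' : A, dfam t (s, a')
    else (Fintype.card A : ℝ)⁻¹

lemma polOf_isPolicy [Nonempty A] {dfam : ℕ → S × A → ℝ} (h : ∀ t sa, 0 ≤ dfam t sa) :
    IsPolicy (polOf dfam) := by
  intro t s
  constructor
  · intro a
    simp only [polOf]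
    split_ifs with hpos
    · exact div_nonneg (h t (s, a)) (le_of_lt hpos)
    · positivity
  · simp only [polOf]
    by_cases hpos : 0 < ∑ a' : A, dfam t (s, a')
    · simp only [if_pos hpos]
      rw [← Finset.sum_div, div_self (ne_of_gt hpos)]
    · simp only [if_neg hpos]
      rw [Finset.sum_const, Finset.card_univ, nsmul_eq_mul]
      rw [mul_inv_cancel₀]
      exact Nat.cast_ne_zero.mpr Fintype.card_ne_zero

lemma polOf_inPi {dfam : ℕ → S × A → ℝ} [Nonempty A] (h : ∀ t sa, 0 ≤ dfam t sa) :
    InPi T dfam (polOf dfam) := by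
  refine ⟨polOf_isPolicy h, fun t _ s a hpos => ?_⟩
  simp only [polOf, if_pos hpos]

lemma toFam_nonneg {d : Fin (T + 1) × S × A → ℝ} (hd : ∀ x, 0 ≤ d x) :
    ∀ t sa, 0 ≤ toFam T d t sa := by
  intro t sa
  rw [toFam]
  split_ifs with h
  · exact hd _
  · exact le_rfl

lemma psi_eq_of_feas [DecidableEq S] (hμ0 : IsSimplex μ0) (hp : IsKernel T p) (hL : IsFlow L)
    {d : Fin (T + 1) × S × A → ℝ} (hd0 : ∀ x, 0 ≤ d x)
    (hfeas : ∀ row, mulVec (ALmat T p L) d row = bvec T μ0 row)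
    (hPi : InPi T (toFam T d) π) :
    ∀ t, t ≤ T → ∀ sa, psi μ0 p π L t sa = toFam T d t sa := by
  have hπ := hPi.1
  have key0 : ∀ s : S, ∑ a, toFam T d 0 (s, a) = μ0 s := by
    intro s
    have h := hfeas (⟨T, by omega⟩, s)
    rw [mulVec_ALmat, dif_neg (by simp)] at h
    rw [bvec, if_pos (by simp)] at h
    rw [← h]
    apply Finset.sum_congr rfl
    intro a _
    rw [toFam, dif_pos (by omega)]
  have keyt : ∀ t, t < T → ∀ s : S, ∑ a, toFam T d (t + 1) (s, a)
      = ∑ sa' : S × A, p t sa'.1 sa'.2 (L t) s * toFam T d t sa' := by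
    intro t ht s
    have h := hfeas (⟨t, by omega⟩, s)
    rw [mulVec_ALmat, dif_pos (by simpa using ht)] at h
    rw [bvec, if_neg (by simp; omega)] at h
    rw [sub_eq_zero] at h
    have e1 : ∀ a : A, d (⟨(t : ℕ) + 1, by omega⟩, s, a) = toFam T d (t + 1) (s, a) := by
      intro a
      rw [toFam, dif_pos (by omega)]
    have e2 : ∀ sa' : S × A, d ((⟨t, by omega⟩ : Fin (T + 1)), sa'.1, sa'.2)
        = toFam T d t sa' := by
      intro sa'
      rw [toFam, dif_pos (by omega)]
    rw [Finset.sum_congr rfl fun a _ => e1 a] at h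
    rw [← h]
    exact Finset.sum_congr rfl fun sa' _ => by rw [e2 sa']
  intro t
  induction t with
  | zero =>
      intro _ sa
      have hmarg := key0 sa.1
      show π 0 sa.1 sa.2 * μ0 sa.1 = toFam T d 0 sa
      by_cases hpos : 0 < ∑ a', toFam T d 0 (sa.1, a')
      · have hratio := hPi.2 0 (by omega) sa.1 sa.2 hpos
        rw [hratio, hmarg, ← hmarg]
        rw [div_mul_cancel₀]
        rw [hmarg] at hpos ⊢
        exact ne_of_gt hpos
      · have hall : ∀ a', toFam T d 0 (sa.1, a') = 0 := by
          intro a'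
          have hnn : ∀ a' ∈ Finset.univ, (0:ℝ) ≤ toFam T d 0 (sa.1, a') :=
            fun a' _ => toFam_nonneg hd0 0 _
          have : ∑ a', toFam T d 0 (sa.1, a') = 0 := le_antisymm (not_lt.mp hpos)
            (Finset.sum_nonneg hnn)
          have := (Finset.sum_eq_zero_iff_of_nonneg hnn).mp this
          exact this a' (Finset.mem_univ a')
        have hμz : μ0 sa.1 = 0 := by
          rw [← hmarg]
          exact Finset.sum_eq_zero fun a' _ => hall a'
        rw [hμz, mul_zero, hall sa.2]
  | succ t ih =>
      intro ht sa
      have htT : t < T := by omega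
      have ihf : ∀ sa', psi μ0 p π L t sa' = toFam T d t sa' := ih (by omega)
      have hM : (∑ sa' : S × A, p t sa'.1 sa'.2 (L t) sa.1 * psi μ0 p π L t sa')
          = ∑ a', toFam T d (t + 1) (sa.1, a') := by
        rw [keyt t htT sa.1]
        exact Finset.sum_congr rfl fun sa' _ => by rw [ihf sa']
      show π (t + 1) sa.1 sa.2 * _ = toFam T d (t + 1) sa
      by_cases hpos : 0 < ∑ a', toFam T d (t + 1) (sa.1, a')
      · have hratio := hPi.2 (t + 1) ht sa.1 sa.2 hpos
        rw [hratio, hM, div_mul_cancel₀]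
        exact ne_of_gt hpos
      · have hnn : ∀ a' ∈ Finset.univ, (0:ℝ) ≤ toFam T d (t + 1) (sa.1, a') :=
          fun a' _ => toFam_nonneg hd0 _ _
        have hzero : ∑ a', toFam T d (t + 1) (sa.1, a') = 0 :=
          le_antisymm (not_lt.mp hpos) (Finset.sum_nonneg hnn)
        have hall := (Finset.sum_eq_zero_iff_of_nonneg hnn).mp hzero
        rw [hM, hzero, mul_zero, hall sa.2 (Finset.mem_univ sa.2)]

omit [Fintype S] [Fintype A] in
lemma toVec_toFam (d : Fin (T + 1) × S × A → ℝ) : toVec T (toFam T d) = d := by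
  funext x
  rw [toVec, toFam, dif_pos x.1.isLt]

omit [Fintype S] [Fintype A] in
lemma toFam_toVec (dfam : ℕ → S × A → ℝ) {t : ℕ} (ht : t ≤ T) :
    toFam T (toVec T dfam) t = dfam t := by
  funext sa
  rw [toFam, dif_pos (by omega)]
  rfl

lemma psi_eq_of_cons (hcons : ∀ t ≤ T, L t = psiInd μ0 p π t) :
    ∀ t, t ≤ T → psi μ0 p π L t = L t := by
  intro t
  induction t with
  | zero =>
      intro h
      rw [hcons 0 h]
      rfl
  | succ t ih =>
      intro ht
      funext sa
      show π (t + 1) sa.1 sa.2 * _ = L (t + 1) sa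
      rw [hcons (t + 1) ht]
      show _ = psiInd μ0 p π (t + 1) sa
      show _ * (∑ sa' : S × A, p t sa'.1 sa'.2 (L t) sa.1 * psi μ0 p π L t sa') = _
      rw [ih (by omega), hcons t (by omega)]
      rfl

lemma psiInd_eq_of_fix (hpsiL : ∀ t ≤ T, psi μ0 p π L t = L t) :
    ∀ t, t ≤ T → psiInd μ0 p π t = L t := by
  intro t
  induction t with
  | zero =>
      intro h
      rw [← hpsiL 0 h]
      rfl
  | succ t ih =>
      intro ht
      funext sa
      show π (t + 1) sa.1 sa.2
          * (∑ sa' : S × A, p t sa'.1 sa'.2 (psiInd μ0 p π t) sa.1 * psiInd μ0 p π t sa')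
          = L (t + 1) sa
      rw [ih (by omega), ← hpsiL (t + 1) ht, ← hpsiL t (by omega)]
      show _ = π (t + 1) sa.1 sa.2
          * (∑ sa' : S × A, p t sa'.1 sa'.2 (L t) sa.1 * psi μ0 p π L t sa')
      rw [hpsiL t (by omega)]

lemma inPi_of_fix (hπ : IsPolicy π) (hpsiL : ∀ t ≤ T, psi μ0 p π L t = L t) :
    InPi T L π := by
  refine ⟨hπ, fun t ht s a hpos => ?_⟩
  have hmul : L t (s, a) = π t s a * ∑ a', L t (s, a') := by
    conv_lhs => rw [← hpsiL t ht]
    rw [psi_eq_pol_mul_marg hπ, hpsiL t ht]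
  rw [hmul, mul_div_assoc, div_self (ne_of_gt hpos), mul_one]

/-- Weak duality / sufficiency of the KKT conditions. -/
lemma lp_opt_of_kkt_sums {m J : Type*} [Fintype m] [Fintype J] {k : ℕ}
    (Amat : m → J → ℝ) (Cmat : Fin k → J → ℝ) (r : J → ℝ) (b : m → ℝ) (γ : Fin k → ℝ)
    (d : J → ℝ) (y : m → ℝ) (z : J → ℝ) (lam : Fin k → ℝ)
    (hstat : ∀ x, -(r x) = (∑ row, Amat row x * y row) + z x - ∑ i, Cmat i x * lam i)
    (hA : ∀ row, ∑ j, Amat row j * d j = b row) (hC : ∀ i, ∑ j, Cmat i j * d j ≤ γ i)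
    (hzd : ∑ j, z j * d j = 0) (hz : ∀ x, 0 ≤ z x) (hlam : ∀ i, 0 ≤ lam i)
    (hcs : (∑ i, lam i * ((∑ j, Cmat i j * d j) - γ i)) = 0)
    (d' : J → ℝ) (hA' : ∀ row, ∑ j, Amat row j * d' j = b row)
    (hC' : ∀ i, ∑ j, Cmat i j * d' j ≤ γ i) (hP' : ∀ j, 0 ≤ d' j) :
    ∑ j, r j * d' j ≤ ∑ j, r j * d j := by
  have key : ∀ e : J → ℝ, (∀ row, ∑ j, Amat row j * e j = b row) →
      ∑ j, r j * e j = -(∑ row, y row * b row) - (∑ j, z j * e j)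
        + ∑ i, lam i * (∑ j, Cmat i j * e j) := by
    intro e he
    have h1 : ∀ j, r j * e j
        = -((∑ row, Amat row j * y row) * e j) - z j * e j
          + (∑ i, Cmat i j * lam i) * e j := by
      intro j
      have hr : r j = -((∑ row, Amat row j * y row) + z j - ∑ i, Cmat i j * lam i) := by
        linarith [hstat j]
      rw [hr]; ring
    rw [Finset.sum_congr rfl fun j _ => h1 j]
    have e2 : ∑ j, (∑ row, Amat row j * y row) * e j = ∑ row, y row * b row := by
      rw [Finset.sum_congr rfl fun j (_ : j ∈ Finset.univ) =>
        Finset.sum_mul Finset.univ (fun row => Amat row j * y row) (e j)]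
      rw [Finset.sum_comm]
      apply Finset.sum_congr rfl
      intro row _
      rw [← he row, Finset.mul_sum]
      exact Finset.sum_congr rfl fun j _ => by ring
    have e3 : ∑ j, (∑ i, Cmat i j * lam i) * e j
        = ∑ i, lam i * (∑ j, Cmat i j * e j) := by
      rw [Finset.sum_congr rfl fun j (_ : j ∈ Finset.univ) =>
        Finset.sum_mul Finset.univ (fun i => Cmat i j * lam i) (e j)]
      rw [Finset.sum_comm]
      apply Finset.sum_congr rfl
      intro i _
      rw [Finset.mul_sum]
      exact Finset.sum_congr rfl fun j _ => by ring
    rw [Finset.sum_add_distrib, Finset.sum_sub_distrib, Finset.sum_neg_distrib, e2, e3]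
  have h1 := key d' hA'
  have h2 := key d hA
  rw [hzd] at h2
  have hexp : ∑ i, lam i * ((∑ j, Cmat i j * d j) - γ i)
      = (∑ i, lam i * (∑ j, Cmat i j * d j)) - ∑ i, lam i * γ i := by
    rw [← Finset.sum_sub_distrib]
    exact Finset.sum_congr rfl fun i _ => by ring
  rw [hexp] at hcs
  have h4 : ∑ i, lam i * (∑ j, Cmat i j * d' j) ≤ ∑ i, lam i * γ i :=
    Finset.sum_le_sum fun i _ => mul_le_mul_of_nonneg_left (hC' i) (hlam i)
  have h5 : 0 ≤ ∑ j, z j * d' j :=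
    Finset.sum_nonneg fun j _ => mul_nonneg (hz j) (hP' j)
  linarith

end CorrAux

/-- Proposition 3.1: `(π, L)` is a CMFG Nash equilibrium if and only if `π ∈ Π(L)` and
there exist `(y, z, λ)` such that `(L, y, z, λ)` solves the KKT system `𝒦(L)`. -/
theorem cmfg_nash_iff_kkt {S A : Type*} [Fintype S] [Fintype A] [DecidableEq S]
    [Nonempty S] [Nonempty A]
    (T k : ℕ) (μ0 : S → ℝ) (hμ0 : IsSimplex μ0)
    (p : ℕ → S → A → (S × A → ℝ) → S → ℝ) (hp : IsKernel T p)
    (r : ℕ → S → A → (S × A → ℝ) → ℝ)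
    (c : ℕ → S → A → (S × A → ℝ) → Fin k → ℝ) (γ0 : Fin k → ℝ)
    (π : ℕ → S → A → ℝ) (L : ℕ → S × A → ℝ) (hL : IsFlow L) :
    IsCMFGNash T k μ0 p r c γ0 π L ↔
      (InPi T L π ∧ ∃ (y : Fin (T + 1) × S → ℝ) (z : Fin (T + 1) × S × A → ℝ)
        (lam : Fin k → ℝ), KKT T k μ0 p r c γ0 L (toVec T L) y z lam) := by
  classical
  -- correspondence between dot products and values/costs
  have hdotV : ∀ π' : ℕ → S → A → ℝ,
      dot (rLvec T r L) (toVec T (psi μ0 p π' L)) = V T μ0 p r π' L := by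
    intro π'
    rw [V, dot, Fintype.sum_prod_type, ← Fin.sum_univ_eq_sum_range
      (fun t => ∑ sa : S × A, r t sa.1 sa.2 (L t) * psi μ0 p π' L t sa) (T + 1)]
    rfl
  have hdotC : ∀ (π' : ℕ → S → A → ℝ) (i : Fin k),
      dot (cLmat T k c L i) (toVec T (psi μ0 p π' L)) = Cost T k μ0 p c π' L i := by
    intro π' i
    rw [Cost, dot, Fintype.sum_prod_type, ← Fin.sum_univ_eq_sum_range
      (fun t => ∑ sa : S × A, c t sa.1 sa.2 (L t) i * psi μ0 p π' L t sa) (T + 1)]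
    rfl
  constructor
  · rintro ⟨⟨hπ, hcost, hoptV⟩, hcons⟩
    have hpsiL : ∀ t ≤ T, psi μ0 p π L t = L t := psi_eq_of_cons hcons
    have hInPi : InPi T L π := inPi_of_fix hπ hpsiL
    have htv : toVec T (psi μ0 p π L) = toVec T L := by
      funext x
      show psi μ0 p π L (x.1 : ℕ) _ = L (x.1 : ℕ) _
      rw [hpsiL (x.1 : ℕ) (by omega)]
    refine ⟨hInPi, ?_⟩
    have hfA : ∀ row, ∑ j, ALmat T p L row j * toVec T L j = bvec T μ0 row := by
      intro row
      have := feas_psi (p := p) (L := L) hμ0 hπ row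
      rw [htv] at this
      exact this
    have hfC : ∀ i, (∑ j, cLmat T k c L i j * toVec T L j) ≤ γ0 i := by
      intro i
      have := hdotC π i
      rw [htv] at this
      rw [show (∑ j, cLmat T k c L i j * toVec T L j) = dot (cLmat T k c L i) (toVec T L)
        from rfl, this]
      exact hcost i
    have hfP : ∀ j, 0 ≤ toVec T L j := fun j => (hL (j.1 : ℕ)).1 _
    have hopt : ∀ d' : Fin (T + 1) × S × A → ℝ,
        (∀ row, ∑ j, ALmat T p L row j * d' j = bvec T μ0 row) →
        (∀ i, (∑ j, cLmat T k c L i j * d' j) ≤ γ0 i) → (∀ j, 0 ≤ d' j) →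
        (∑ j, rLvec T r L j * d' j) ≤ ∑ j, rLvec T r L j * toVec T L j := by
      intro d' hA' hC' hP'
      set π' := polOf (toFam T d') with hπ'def
      have hπ' : IsPolicy π' := polOf_isPolicy (toFam_nonneg hP')
      have hInPi' : InPi T (toFam T d') π' := polOf_inPi (toFam_nonneg hP')
      have hψ' := psi_eq_of_feas (π := π') hμ0 hp hL hP' (fun row => hA' row) hInPi'
      have htv' : toVec T (psi μ0 p π' L) = d' := by
        funext x
        show psi μ0 p π' L (x.1 : ℕ) _ = d' x
        rw [hψ' (x.1 : ℕ) (by omega) _]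
        rw [show toFam T d' (x.1 : ℕ) (x.2.1, x.2.2) = toVec T (toFam T d') x from
          (by rw [toVec]), toVec_toFam]
      have hcost' : ∀ i, Cost T k μ0 p c π' L i ≤ γ0 i := by
        intro i
        rw [← hdotC π' i, htv']
        exact hC' i
      have hVle := hoptV π' hπ' hcost'
      have e1 : (∑ j, rLvec T r L j * d' j) = V T μ0 p r π' L := by
        rw [← hdotV π', htv']
        rfl
      have e2 : (∑ j, rLvec T r L j * toVec T L j) = V T μ0 p r π L := by
        rw [← hdotV π, htv]
        rfl
      rw [e1, e2]
      exact hVle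
    obtain ⟨y, z, lam, h1, h2, h3, h4, h5⟩ :=
      kkt_exists (ALmat T p L) (cLmat T k c L) (rLvec T r L) (bvec T μ0) γ0
        (toVec T L) hfA hfC hfP hopt
    exact ⟨y, z, lam, h1, funext hfA, hfC, hfP, h2, h3, h4, h5⟩
  · rintro ⟨hInPi, y, z, lam, hstat, hAd, hCd, hd0, hz0, hzd, hlam0, hcs⟩
    have hπ := hInPi.1
    have hInPi' : InPi T (toFam T (toVec T L)) π := by
      refine ⟨hπ, fun t ht s a hpos => ?_⟩
      rw [toFam_toVec L ht] at hpos ⊢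
      exact hInPi.2 t ht s a hpos
    have hψ := psi_eq_of_feas (π := π) hμ0 hp hL hd0 (fun row => congrFun hAd row) hInPi'
    have hpsiL : ∀ t ≤ T, psi μ0 p π L t = L t := by
      intro t ht
      funext sa
      rw [hψ t ht sa, toFam_toVec L ht]
    have htv : toVec T (psi μ0 p π L) = toVec T L := by
      funext x
      show psi μ0 p π L (x.1 : ℕ) _ = L (x.1 : ℕ) _
      rw [hpsiL (x.1 : ℕ) (by omega)]
    constructor
    · refine ⟨hπ, ?_, ?_⟩
      · intro i
        rw [← hdotC π i, htv]
        exact hCd i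
      · intro π' hπ'pol hπ'cost
        have hA' : ∀ row, mulVec (ALmat T p L) (toVec T (psi μ0 p π' L)) row
            = bvec T μ0 row := feas_psi hμ0 hπ'pol
        have hC' : ∀ i, dot (cLmat T k c L i) (toVec T (psi μ0 p π' L)) ≤ γ0 i := by
          intro i
          rw [hdotC π' i]
          exact hπ'cost i
        have hP' : ∀ x, 0 ≤ toVec T (psi μ0 p π' L) x := fun x =>
          psi_nonneg hμ0 hπ'pol hp hL (x.1 : ℕ) (by omega) _
        have hle := lp_opt_of_kkt_sums (ALmat T p L) (cLmat T k c L) (rLvec T r L)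
          (bvec T μ0) γ0 (toVec T L) y z lam hstat (fun row => congrFun hAd row) hCd
          hzd hz0 hlam0 hcs (toVec T (psi μ0 p π' L)) (fun row => hA' row) hC' hP'
        have e1 : (∑ j, rLvec T r L j * toVec T (psi μ0 p π' L) j) = V T μ0 p r π' L :=
          hdotV π'
        have e2 : (∑ j, rLvec T r L j * toVec T L j) = V T μ0 p r π L := by
          rw [← hdotV π, htv]
          rfl
        rw [e1, e2] at hle
        exact hle
    · intro t ht
      exact (psiInd_eq_of_fix hpsiL t ht).symm

end CMFG
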